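/- In the convolution algebra R* = (R_{mn}(q))*, one has the explicit convolution-power formulas α^{k} = Σ_{i=0}^{mn-1} ξ^{ik} overline{g^i} for all 0 ≤ k ≤ mn-1, and β^{j} = (j)!_q · Σ_{i=0}^{mn-1} overline{g^i x^j} for all 1 ≤ j ≤ n-1, where (j)!_q is the q-factorial. -/

import Mathlib

open scoped TensorProduct

/-- The convolution product on the dual `R* = Hom_K(R, K)` of a coalgebra:
`(f * h)(a) = Σ f(a₍₁₎) h(a₍₂₎)`. -/
noncomputable def conv (K : Type*) {R : Type*} [CommRing K] [AddCommMonoid R]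
    [Module K R] [Coalgebra K R] (f h : R →ₗ[K] K) : R →ₗ[K] K :=
  LinearMap.mul' K K ∘ₗ TensorProduct.map f h ∘ₗ Coalgebra.comul

/-- Convolution powers in `R*`; the zeroth power is the unit `ε` of `R*`. -/
noncomputable def convPow (K : Type*) {R : Type*} [CommRing K] [AddCommMonoid R]
    [Module K R] [Coalgebra K R] (f : R →ₗ[K] K) : ℕ → (R →ₗ[K] K)
  | 0 => Coalgebra.counit
  | j + 1 => conv K f (convPow K f j)

/-- The `q`-factorial `(j)!_q = (1)_q (2)_q ⋯ (j)_q` where `(i)_q = 1 + q + ⋯ + q^{i-1}`. -/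
def qFactorial {K : Type*} [Field K] (q : K) : ℕ → K
  | 0 => 1
  | j + 1 => qFactorial q j * (∑ i ∈ Finset.range (j + 1), q ^ i)

/-- Gaussian binomial-type coefficients defined by the `q`-Pascal recursion. -/
def qc {K : Type*} [Field K] (q : K) : ℕ → ℕ → K
  | _, 0 => 1
  | 0, _ + 1 => 0
  | l + 1, s + 1 => qc q l s + q ^ (s + 1) * qc q l (s + 1)

lemma qc_zero {K : Type*} [Field K] (q : K) (l : ℕ) : qc q l 0 = 1 := by
  cases l <;> rfl

lemma qc_of_lt {K : Type*} [Field K] (q : K) : ∀ l s : ℕ, l < s → qc q l s = 0 := by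
  intro l
  induction l with
  | zero =>
    intro s hs
    cases s with
    | zero => omega
    | succ s => rfl
  | succ l ih =>
    intro s hs
    cases s with
    | zero => omega
    | succ s =>
      show qc q l s + q ^ (s + 1) * qc q l (s + 1) = 0
      rw [ih s (by omega), ih (s + 1) (by omega), mul_zero, add_zero]

lemma qc_one {K : Type*} [Field K] (q : K) : ∀ l : ℕ, qc q l 1 = ∑ i ∈ Finset.range l, q ^ i := by
  intro l
  induction l with
  | zero => simp [qc]
  | succ l ih =>
    show qc q l 0 + q ^ 1 * qc q l 1 = _
    rw [qc_zero, ih, geom_sum_succ, pow_one]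
    ring

/-- in `R* = (R_{mn}(q))*`, `α^k = Σ_{i=0}^{mn-1} ξ^{ik} overline{g^i}`
for `0 ≤ k ≤ mn-1`, and `β^j = (j)!_q · Σ_{i=0}^{mn-1} overline{g^i x^j}` for
`1 ≤ j ≤ n-1`. -/
theorem radford_dual_power_formulas (K : Type*) [Field K] [IsAlgClosed K]
    (m n : ℕ) (hm : 2 ≤ m) (hn : 1 ≤ n) (hchar : ¬ (ringChar K ∣ m * n))
    (q : K) (hq : IsPrimitiveRoot q n)
    (ξ : K) (hξ : IsPrimitiveRoot ξ (m * n)) (hξm : ξ ^ m = q)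
    (R : Type*) [Ring R] [HopfAlgebra K R] (g x : R)
    (hgo : g ^ (m * n) = 1) (hxn : x ^ n = g ^ n - 1) (hxg : x * g = q • (g * x))
    (B : Module.Basis (Fin (m * n) × Fin n) K R)
    (hB : ∀ p : Fin (m * n) × Fin n, B p = g ^ (p.1 : ℕ) * x ^ (p.2 : ℕ))
    (hcg : Coalgebra.comul (R := K) g = g ⊗ₜ[K] g)
    (hcx : Coalgebra.comul (R := K) x = x ⊗ₜ[K] g + 1 ⊗ₜ[K] x)
    (heg : Coalgebra.counit (R := K) g = (1 : K))
    (hex : Coalgebra.counit (R := K) x = (0 : K))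
    (α β : R →ₗ[K] K)
    (hα : ∀ (i : Fin (m * n)) (j : Fin n),
      α (g ^ (i : ℕ) * x ^ (j : ℕ)) = if (j : ℕ) = 0 then ξ ^ (i : ℕ) else 0)
    (hβ : ∀ (i : Fin (m * n)) (j : Fin n),
      β (g ^ (i : ℕ) * x ^ (j : ℕ)) = if (j : ℕ) = 1 then 1 else 0) :
    (∀ k : ℕ, k ≤ m * n - 1 →
      convPow K α k = ∑ i : Fin (m * n), ξ ^ ((i : ℕ) * k) • B.coord (i, ⟨0, hn⟩)) ∧
    (∀ (j : ℕ) (_hj1 : 1 ≤ j) (hjn : j ≤ n - 1),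
      convPow K β j = qFactorial q j • ∑ i : Fin (m * n), B.coord (i, ⟨j, by omega⟩)) := by
  have hmn0 : 0 < m * n := Nat.mul_pos (by omega) hn
  have hg' : ∀ i : ℕ, g ^ i = g ^ (i % (m * n)) := by
    intro i
    conv_lhs => rw [← Nat.mod_add_div i (m * n)]
    rw [pow_add, pow_mul, hgo, one_pow, mul_one]
  have hξ' : ∀ i : ℕ, ξ ^ i = ξ ^ (i % (m * n)) := by
    intro i
    conv_lhs => rw [← Nat.mod_add_div i (m * n)]
    rw [pow_add, pow_mul, hξ.pow_eq_one, one_pow, mul_one]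
  have hα' : ∀ (i j : ℕ), j < n → α (g ^ i * x ^ j) = if j = 0 then ξ ^ i else 0 := by
    intro i j hj
    rw [hg' i, hξ' i]
    exact hα ⟨i % (m * n), Nat.mod_lt _ hmn0⟩ ⟨j, hj⟩
  have hβ' : ∀ (i j : ℕ), j < n → β (g ^ i * x ^ j) = if j = 1 then 1 else 0 := by
    intro i j hj
    rw [hg' i]
    exact hβ ⟨i % (m * n), Nat.mod_lt _ hmn0⟩ ⟨j, hj⟩
  -- x q-commutes with powers of g
  have hxgs : ∀ s : ℕ, x * g ^ s = q ^ s • (g ^ s * x) := by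
    intro s
    induction s with
    | zero => simp
    | succ s ih =>
      rw [pow_succ g, ← mul_assoc, ih, smul_mul_assoc, mul_assoc, hxg, mul_smul_comm,
        smul_smul, ← mul_assoc, ← pow_succ g, ← pow_succ q]
  -- expansion of (x⊗g + 1⊗x)^l
  have hpow : ∀ l : ℕ, ((x ⊗ₜ[K] g + 1 ⊗ₜ[K] x : R ⊗[K] R)) ^ l
      = ∑ s ∈ Finset.range (l + 1), qc q l s • ((x ^ s) ⊗ₜ[K] (g ^ s * x ^ (l - s))) := by
    intro l
    induction l with
    | zero => simp [Algebra.TensorProduct.one_def, qc_zero]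
    | succ l ih =>
      have key : ∀ s ∈ Finset.range (l + 1),
          (x ⊗ₜ[K] g + 1 ⊗ₜ[K] x : R ⊗[K] R)
            * (qc q l s • ((x ^ s) ⊗ₜ[K] (g ^ s * x ^ (l - s))))
          = qc q l s • ((x ^ (s + 1)) ⊗ₜ[K] (g ^ (s + 1) * x ^ (l - s)))
            + (qc q l s * q ^ s) • ((x ^ s) ⊗ₜ[K] (g ^ s * x ^ (l + 1 - s))) := by
        intro s hs
        rw [Finset.mem_range] at hs
        rw [mul_smul_comm, add_mul, Algebra.TensorProduct.tmul_mul_tmul,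
          Algebra.TensorProduct.tmul_mul_tmul, one_mul]
        have h1 : x * x ^ s = x ^ (s + 1) := (pow_succ' x s).symm
        have h2 : g * (g ^ s * x ^ (l - s)) = g ^ (s + 1) * x ^ (l - s) := by
          rw [← mul_assoc, ← pow_succ' g]
        have h3 : x * (g ^ s * x ^ (l - s)) = q ^ s • (g ^ s * x ^ (l + 1 - s)) := by
          rw [← mul_assoc, hxgs s, smul_mul_assoc, mul_assoc, ← pow_succ' x]
          congr 3
          omega
        rw [h1, h2, h3, TensorProduct.tmul_smul, smul_add, smul_smul]
      have hsplit : ∑ t ∈ Finset.range (l + 1 + 1),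
            qc q (l + 1) t • ((x ^ t) ⊗ₜ[K] (g ^ t * x ^ (l + 1 - t)))
          = (∑ s ∈ Finset.range (l + 1),
              qc q l s • ((x ^ (s + 1)) ⊗ₜ[K] (g ^ (s + 1) * x ^ (l - s))))
            + ∑ s ∈ Finset.range (l + 1),
              (qc q l s * q ^ s) • ((x ^ s) ⊗ₜ[K] (g ^ s * x ^ (l + 1 - s))) := by
        rw [Finset.sum_range_succ']
        simp only [Nat.succ_sub_succ]
        have e1 : ∀ s ∈ Finset.range (l + 1),
            qc q (l + 1) (s + 1) • ((x ^ (s + 1)) ⊗ₜ[K] (g ^ (s + 1) * x ^ (l - s)))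
            = qc q l s • ((x ^ (s + 1)) ⊗ₜ[K] (g ^ (s + 1) * x ^ (l - s)))
              + (q ^ (s + 1) * qc q l (s + 1))
                  • ((x ^ (s + 1)) ⊗ₜ[K] (g ^ (s + 1) * x ^ (l - s))) := by
          intro s _
          rw [show qc q (l + 1) (s + 1) = qc q l s + q ^ (s + 1) * qc q l (s + 1) from rfl,
            add_smul]
        rw [Finset.sum_congr rfl e1, Finset.sum_add_distrib,
          Finset.sum_range_succ'
            (fun s => (qc q l s * q ^ s) • ((x ^ s) ⊗ₜ[K] (g ^ s * x ^ (l + 1 - s)))),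
          Finset.sum_range_succ
            (fun s => (q ^ (s + 1) * qc q l (s + 1))
              • ((x ^ (s + 1)) ⊗ₜ[K] (g ^ (s + 1) * x ^ (l - s)))),
          qc_of_lt q l (l + 1) (by omega)]
        simp only [Nat.succ_sub_succ]
        have e2 : ∀ s ∈ Finset.range l,
            (qc q l (s + 1) * q ^ (s + 1)) • ((x ^ (s + 1)) ⊗ₜ[K] (g ^ (s + 1) * x ^ (l - s)))
            = (q ^ (s + 1) * qc q l (s + 1))
                • ((x ^ (s + 1)) ⊗ₜ[K] (g ^ (s + 1) * x ^ (l - s))) := by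
          intro s _
          rw [mul_comm (qc q l (s + 1))]
        rw [Finset.sum_congr rfl e2]
        simp only [qc_zero, pow_zero, mul_one, one_smul, mul_zero, zero_smul, add_zero]
        abel
      rw [pow_succ', ih, Finset.mul_sum, Finset.sum_congr rfl key, Finset.sum_add_distrib]
      exact hsplit.symm
  -- comultiplication of the basis elements
  have hcom : ∀ (i l : ℕ), Coalgebra.comul (R := K) (g ^ i * x ^ l)
      = ∑ s ∈ Finset.range (l + 1),
          qc q l s • ((g ^ i * x ^ s) ⊗ₜ[K] (g ^ (i + s) * x ^ (l - s))) := by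
    intro i l
    rw [Bialgebra.comul_mul, Bialgebra.comul_pow, Bialgebra.comul_pow, hcg, hcx,
      Algebra.TensorProduct.tmul_pow, hpow l, Finset.mul_sum]
    refine Finset.sum_congr rfl fun s _ => ?_
    rw [mul_smul_comm, Algebra.TensorProduct.tmul_mul_tmul, ← mul_assoc, ← pow_add]
  -- evaluation of a convolution product on a basis element
  have hconv : ∀ (f h : R →ₗ[K] K) (i l : ℕ), conv K f h (g ^ i * x ^ l)
      = ∑ s ∈ Finset.range (l + 1),
          qc q l s * (f (g ^ i * x ^ s) * h (g ^ (i + s) * x ^ (l - s))) := by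
    intro f h i l
    simp only [conv, LinearMap.coe_comp, Function.comp_apply, hcom, map_sum, map_smul,
      TensorProduct.map_tmul, LinearMap.mul'_apply, smul_eq_mul]
  -- the counit on basis elements
  have hcnt : ∀ (i l : ℕ), Coalgebra.counit (R := K) (g ^ i * x ^ l)
      = if l = 0 then 1 else 0 := by
    intro i l
    rw [Bialgebra.counit_mul, Bialgebra.counit_pow, Bialgebra.counit_pow, heg, hex,
      one_pow, one_mul, zero_pow_eq]
  -- powers of α evaluated on basis elements
  have hαk : ∀ (k i l : ℕ), l < n →
      convPow K α k (g ^ i * x ^ l) = if l = 0 then ξ ^ (i * k) else 0 := by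
    intro k
    induction k with
    | zero =>
      intro i l _
      simp [convPow, hcnt i l]
    | succ k ih =>
      intro i l hl
      show conv K α (convPow K α k) (g ^ i * x ^ l) = _
      rw [hconv, Finset.sum_eq_single 0]
      · simp only [Nat.add_zero, Nat.sub_zero]
        rw [qc_zero, one_mul, hα' i 0 (by omega), if_pos rfl, ih i l hl]
        by_cases h0 : l = 0
        · rw [if_pos h0, if_pos h0, ← pow_add]
          congr 1
          ring
        · rw [if_neg h0, if_neg h0, mul_zero]
      · intro s hs hs0
        rw [Finset.mem_range] at hs
        rw [hα' i s (by omega), if_neg hs0, zero_mul, mul_zero]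
      · intro h
        exact absurd (Finset.mem_range.mpr (Nat.succ_pos l)) h
  have hβk : ∀ (j i l : ℕ), l < n →
      convPow K β j (g ^ i * x ^ l) = if l = j then qFactorial q j else 0 := by
    intro j
    induction j with
    | zero =>
      intro i l _
      simp [convPow, hcnt i l, qFactorial]
    | succ j ih =>
      intro i l hl
      show conv K β (convPow K β j) (g ^ i * x ^ l) = _
      rw [hconv, Finset.sum_eq_single 1]
      · by_cases hl0 : l = 0
        · subst hl0
          rw [show qc q 0 1 = (0 : K) from rfl, zero_mul, if_neg (by omega)]
        · rw [hβ' i 1 (by omega), if_pos rfl, one_mul, ih (i + 1) (l - 1) (by omega), qc_one]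
          by_cases hlj : l = j + 1
          · rw [if_pos (show l - 1 = j by omega), if_pos hlj, hlj,
              show qFactorial q (j + 1)
                = qFactorial q j * ∑ t ∈ Finset.range (j + 1), q ^ t from rfl]
            ring
          · rw [if_neg (show l - 1 ≠ j by omega), if_neg hlj, mul_zero]
      · intro s hs hs1
        rw [Finset.mem_range] at hs
        rw [hβ' i s (by omega), if_neg hs1, zero_mul, mul_zero]
      · intro h1
        have hl0 : l = 0 := by
          by_contra h
          exact h1 (Finset.mem_range.mpr (by omega))
        subst hl0
        rw [show qc q 0 1 = (0 : K) from rfl, zero_mul]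
  constructor
  · intro k _
    apply B.ext
    rintro ⟨p1, p2⟩
    have hL : convPow K α k (B (p1, p2)) = if (p2 : ℕ) = 0 then ξ ^ ((p1 : ℕ) * k) else 0 := by
      rw [hB]
      exact hαk k p1 p2 p2.isLt
    rw [hL, LinearMap.sum_apply]
    simp only [LinearMap.smul_apply, Module.Basis.coord_apply, Module.Basis.repr_self, smul_eq_mul,
      Finsupp.single_apply, Prod.mk.injEq, mul_ite, mul_one, mul_zero]
    by_cases h2 : (p2 : ℕ) = 0
    · have hp2 : p2 = ⟨0, hn⟩ := Fin.ext h2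
      subst hp2
      rw [if_pos rfl]
      simp only [Fin.mk.injEq, eq_self_iff_true, and_true]
      rw [Finset.sum_ite_eq Finset.univ p1 (fun i => ξ ^ ((i : ℕ) * k))]
      simp
    · rw [if_neg h2]
      symm
      apply Finset.sum_eq_zero
      intro i _
      rw [if_neg]
      rintro ⟨-, h⟩
      exact h2 (by rw [h])
  · intro j hj1 hjn
    apply B.ext
    rintro ⟨p1, p2⟩
    have hL : convPow K β j (B (p1, p2)) = if (p2 : ℕ) = j then qFactorial q j else 0 := by
      rw [hB]
      exact hβk j p1 p2 p2.isLt
    rw [hL, LinearMap.smul_apply, LinearMap.sum_apply]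
    simp only [Module.Basis.coord_apply, Module.Basis.repr_self, Finsupp.single_apply, Prod.mk.injEq,
      smul_eq_mul]
    have hjlt : j < n := by omega
    by_cases h2 : (p2 : ℕ) = j
    · have hp2 : p2 = ⟨j, hjlt⟩ := Fin.ext h2
      rw [hp2]
      rw [if_pos rfl]
      simp only [Fin.mk.injEq, eq_self_iff_true, and_true]
      rw [Finset.sum_ite_eq Finset.univ p1 (fun _ => (1 : K))]
      simp
    · rw [if_neg h2]
      rw [Finset.sum_eq_zero, mul_zero]
      intro i _
      rw [if_neg]
      rintro ⟨-, h⟩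
      exact h2 (by rw [h])
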